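/- arXiv:0902.1321 — 4 statements merged into one kernel-verified Lean document; each statement's English description precedes it below -/
import Mathlib

section
/- If f_1, ..., f_d are polynomials each of degree at most n-1, then their Wronskian Wr(f_1,...,f_d)(z) has degree at most d(n-d). -/
/-!
The Wronskian is multilinear in `f₁, …, f_d`, so expanding each `f_j` in monomials reduces the
bound to `Wr(X ^ r₁, …, X ^ r_d)` with `r_j ≤ n - 1`. This vanishes unless the `r_j` are distinct
(two equal columns), and each term of its Leibniz expansion is a multiple of
`X ^ (∑ r_j - (0 + 1 + ⋯ + (d - 1)))`. For distinct `r_j ≤ n - 1` the sharp bound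
`∑ r_j ≤ (n - 1) + (n - 2) + ⋯ + (n - d)` makes this exponent at most `d (n - d)`.
-/

open Polynomial

/-- The Wronskian of `d` polynomials. -/
noncomputable def wronskian {F : Type*} [Field F] (d : ℕ) (f : Fin d → Polynomial F) :
    Polynomial F :=
  Matrix.det (Matrix.of fun i j : Fin d => (fun p => Polynomial.derivative p)^[i.val] (f j))

open Finset in
theorem sum_sub_sum_fin_le_of_injective {d m : ℕ} (r : Fin d → ℕ) (hr : Function.Injective r)
    (hm : ∀ j, r j ≤ m) : ∑ j, r j - ∑ i : Fin d, (i : ℕ) ≤ d * (m + 1 - d) := by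
  have hdm : d ≤ m + 1 := by
    simpa using Fintype.card_le_of_injective
      (fun j => (⟨r j, Nat.lt_succ_of_le (hm j)⟩ : Fin (m + 1)))
      fun a b h => hr (congrArg Fin.val h)
  have hcast : Function.Injective fun j => (r j : ℤ) := Nat.cast_injective.comp hr
  -- `d` distinct integers `≤ m` sum to at most `m + (m - 1) + ⋯ + (m - d + 1)`
  have hsharp := sum_le_sum_range (s := univ.image fun j => (r j : ℤ)) (c := m) (by simp [hm])
  rw [sum_image fun a _ b _ h => hcast h, card_image_of_injective _ hcast, card_univ,
    Fintype.card_fin, sum_sub_distrib, sum_const, card_range, nsmul_eq_mul] at hsharp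
  have htri := sum_range_id_mul_two d
  rw [Fin.sum_univ_eq_sum_range (fun i => i) d]
  rcases d with _ | e
  · simp
  obtain ⟨k, rfl⟩ : ∃ k, m = e + k := ⟨m - e, by omega⟩
  rw [show e + k + 1 - (e + 1) = k by omega, tsub_le_iff_right]
  zify at hsharp htri ⊢
  push_cast at hsharp htri ⊢
  linear_combination hsharp - htri

theorem Matrix.natDegree_det_le_sum_sub_sum {R n : Type*} [CommRing R] [Fintype n]
    [DecidableEq n] (M : Matrix n n R[X]) (r c : n → ℕ)
    (hM : ∀ i j, M i j ≠ 0 → (M i j).natDegree + c i ≤ r j) :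
    M.det.natDegree ≤ ∑ j, r j - ∑ i, c i := by
  rw [Matrix.det_apply]
  refine natDegree_sum_le_of_forall_le _ _ fun σ _ => (natDegree_smul_le _ _).trans ?_
  by_cases hzero : ∃ i, M (σ i) i = 0
  · obtain ⟨i, hi⟩ := hzero
    rw [Finset.prod_eq_zero (f := fun j => M (σ j) j) (Finset.mem_univ i) hi, natDegree_zero]
    exact Nat.zero_le _
  push Not at hzero
  have hterm : ∑ i, (M (σ i) i).natDegree + ∑ i, c i ≤ ∑ i, r i := by
    rw [← Equiv.sum_comp σ c, ← Finset.sum_add_distrib]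
    exact Finset.sum_le_sum fun i _ => hM _ _ (hzero i)
  exact (natDegree_prod_le _ _).trans (le_tsub_of_add_le_right hterm)

theorem natDegree_wronskian_X_pow_le {F : Type*} [Field F] {d m : ℕ} (r : Fin d → ℕ)
    (hm : ∀ j, r j ≤ m) :
    (wronskian d fun j => (X : F[X]) ^ r j).natDegree ≤ d * (m + 1 - d) := by
  by_cases hr : Function.Injective r
  · refine (Matrix.natDegree_det_le_sum_sub_sum _ r (fun i => i) fun i j hij => ?_).trans
      (sum_sub_sum_fin_le_of_injective r hr hm)
    simp only [Matrix.of_apply, iterate_derivative_X_pow_eq_smul] at hij ⊢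
    have hi : (i : ℕ) ≤ r j := by
      by_contra! h
      exact hij (by simp [Nat.descFactorial_of_lt h])
    calc _ ≤ r j - i + i := by gcongr; exact (natDegree_smul_le _ _).trans (natDegree_X_pow_le _)
      _ = r j := Nat.sub_add_cancel hi
  · obtain ⟨a, b, hab, hne⟩ := Function.not_injective_iff.mp hr
    rw [_root_.wronskian, Matrix.det_zero_of_column_eq hne (by simp [hab]), natDegree_zero]
    exact Nat.zero_le _

noncomputable def wronskianMultilinear (F : Type*) [Field F] (d : ℕ) :
    MultilinearMap F (fun _ : Fin d => F[X]) F[X] :=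
  (Matrix.detRowAlternating.toMultilinearMap.restrictScalars F).compLinearMap
    fun _ => LinearMap.pi fun i : Fin d => (derivative : F[X] →ₗ[F] F[X]) ^ (i : ℕ)

theorem wronskianMultilinear_apply {F : Type*} [Field F] {d : ℕ} (f : Fin d → F[X]) :
    wronskianMultilinear F d f = wronskian d f := by
  rw [_root_.wronskian, ← Matrix.det_transpose]
  refine congrArg Matrix.det (Matrix.ext fun j i => ?_)
  simp [Module.End.pow_apply]

theorem natDegree_wronskian_le {F : Type*} [Field F] {d m : ℕ} (f : Fin d → F[X])
    (hf : ∀ j, (f j).natDegree ≤ m) : (wronskian d f).natDegree ≤ d * (m + 1 - d) := by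
  have hexp : f = fun j => ∑ e ∈ Finset.range (m + 1), (f j).coeff e • (X : F[X]) ^ e :=
    funext fun j => by
      simp_rw [smul_X_eq_monomial]
      exact as_sum_range' _ _ (Nat.lt_succ_of_le (hf j))
  rw [← wronskianMultilinear_apply, hexp, MultilinearMap.map_sum_finset]
  refine natDegree_sum_le_of_forall_le _ _ fun r hr => ?_
  rw [MultilinearMap.map_smul_univ, wronskianMultilinear_apply]
  refine (natDegree_smul_le _ _).trans (natDegree_wronskian_X_pow_le r fun j => ?_)
  simpa [Nat.lt_succ_iff] using Fintype.mem_piFinset.mp hr j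

theorem degree_wronskian_le_general {F : Type*} [Field F] (d n : ℕ) (f : Fin d → Polynomial F)
    (hf : ∀ i, (f i).degree ≤ ((n - 1 : ℕ) : WithBot ℕ)) :
    (wronskian d f).degree ≤ ((d * (n - d) : ℕ) : WithBot ℕ) := by
  refine natDegree_le_iff_degree_le.mp ((natDegree_wronskian_le f fun j =>
    natDegree_le_iff_degree_le.mpr (hf j)).trans_eq ?_)
  rcases n with _ | n
  · cases d <;> simp
  · simp

/-- If `f 1, ..., f d` each have degree at most `n-1`, then their Wronskian has degree
at most `d * (n - d)`. -/
theorem degree_wronskian_le {F : Type*} [Field F] [CharZero F] (d n : ℕ)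
    (hd : 0 < d) (hdn : d < n) (f : Fin d → Polynomial F)
    (hf : ∀ i, (f i).degree ≤ ((n - 1 : ℕ) : WithBot ℕ)) :
    (wronskian d f).degree ≤ ((d * (n - d) : ℕ) : WithBot ℕ) :=
  degree_wronskian_le_general d n f hf
end

section
/- Let B be the d×n matrix over F[z] with entries B_{ij} = (d/dz)^{i-1} z^{j-1}. For a partition λ fitting in the d×(n-d) rectangle with associated column set J(λ) = {j + λ_{d+1-j} : 1 ≤ j ≤ d}, the maximal minor of B with columns J(λ) equals q_λ · z^{|λ|}, where q_λ = Π_{i<j}(k_j - k_i) with k_j = j + λ_{d+1-j}, and |λ| = λ_1 + ... + λ_d. -/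
/-!
The `(i, j)` entry of the minor is `c_j^{(i)} z^{c_j - i}`, with `c_j^{(i)}` the falling factorial.
Multiplying row `i` by `z^i` and pulling `z^{c_j}` out of column `j` leaves the scalar determinant
`det (c_j^{(i)})`. The falling factorial `x^{(i)}` is a monic polynomial of degree `i` in `x`, so row
operations turn this determinant into the Vandermonde determinant `∏_{i<j} (c_j - c_i)`, and
`c_j + 1 = k_{j+1}`, so this is `q_λ`.
-/

open Polynomial Finset

/-- A partition fitting in the `d × (n-d)` rectangle. -/
def RectPartition (d n : ℕ) :=
  {l : Fin d → ℕ // (∀ i j : Fin d, i ≤ j → l j ≤ l i) ∧ ∀ i, l i ≤ n - d}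

/-- `k_j = j + λ_{d+1-j}` as an integer. -/
def kval {d n : ℕ} (l : RectPartition d n) (i : Fin d) : ℤ :=
  (i.val + 1 + l.1 i.rev : ℕ)

/-- The Vandermonde quantity `q_λ = ∏_{1 ≤ i < j ≤ d} (k_j - k_i)`. -/
def qval {d n : ℕ} (l : RectPartition d n) : ℤ :=
  ∏ p ∈ Finset.univ.filter (fun p : Fin d × Fin d => p.1 < p.2), (kval l p.2 - kval l p.1)

theorem Finset.prod_filter_lt_eq_prod_prod_Ioi {ι M : Type*} [Fintype ι] [LinearOrder ι]
    [LocallyFiniteOrderTop ι] [CommMonoid M] [DecidablePred fun p : ι × ι => p.1 < p.2]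
    (f : ι → ι → M) :
    ∏ p ∈ univ.filter (fun p : ι × ι => p.1 < p.2), f p.1 p.2 = ∏ i, ∏ j ∈ Ioi i, f i j := by
  rw [prod_filter, ← univ_product_univ, prod_product]
  refine prod_congr rfl fun i _ => ?_
  rw [← prod_filter]
  exact prod_congr (by ext; simp) fun _ _ => rfl

section

variable {R : Type*} [CommRing R]

theorem Polynomial.X_pow_mul_iterate_derivative_X_pow (k n : ℕ) :
    (X : R[X]) ^ k * derivative^[k] (X ^ n) = X ^ n * C (n.descFactorial k : R) := by
  rw [iterate_derivative_X_pow_eq_C_mul]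
  rcases le_or_gt k n with hkn | hnk
  · rw [mul_comm (C _), ← mul_assoc, ← pow_add, Nat.add_sub_cancel' hkn]
  · simp [Nat.descFactorial_eq_zero_iff_lt.2 hnk]

theorem Matrix.det_descFactorial {d : ℕ} (c : Fin d → ℕ) :
    (Matrix.of fun i j : Fin d => ((c j).descFactorial i : R)).det
      = ∏ i, ∏ j ∈ Ioi i, ((c j : R) - c i) := by
  -- over `ℤ` first: the falling factorial polynomials are monic of degree `i` only over a domain
  have hℤ : (Matrix.of fun i j : Fin d => ((c j).descFactorial i : ℤ)).det
      = ∏ i, ∏ j ∈ Ioi i, ((c j : ℤ) - c i) := by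
    have h : (Matrix.of fun i j : Fin d => ((c j).descFactorial i : ℤ))
        = (Matrix.of fun i j : Fin d => (descPochhammer ℤ j).eval (c i : ℤ)).transpose := by
      ext i j
      simp [descPochhammer_eval_eq_descFactorial]
    rw [h, Matrix.det_transpose, ← Matrix.det_eval_matrixOfPolynomials_eq_det_vandermonde _ _
      (fun i => descPochhammer_natDegree ℤ i) (fun i => monic_descPochhammer ℤ i),
      Matrix.det_vandermonde]
  have hR := congrArg (Int.cast : ℤ → R) hℤ
  push_cast [Int.cast_det] at hR
  convert hR using 2
  ext
  simp

theorem Matrix.det_iterate_derivative_X_pow {d : ℕ} (c : Fin d → ℕ) {e : ℕ}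
    (he : ∑ j, c j = ∑ i : Fin d, (i : ℕ) + e) :
    (Matrix.of fun i j : Fin d => derivative^[i] ((X : R[X]) ^ c j)).det
      = C (Matrix.of fun i j : Fin d => ((c j).descFactorial i : R)).det * X ^ e := by
  refine (isRegular_X_pow (∑ i : Fin d, (i : ℕ))).left ?_
  dsimp only
  rw [← prod_pow_eq_pow_sum, ← Matrix.det_mul_column]
  simp only [Matrix.of_apply, X_pow_mul_iterate_derivative_X_pow]
  rw [Matrix.det_mul_row (fun j => X ^ c j) (fun i j => C ((c j).descFactorial i : R))]
  have hC : (Matrix.det fun i j : Fin d => C ((c j).descFactorial i : R))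
      = C (Matrix.of fun i j : Fin d => ((c j).descFactorial i : R)).det :=
    (RingHom.map_det C _).symm
  rw [hC, prod_pow_eq_pow_sum, prod_pow_eq_pow_sum, he, pow_add]
  ring

end

theorem minor_of_derivative_matrix_general {F : Type*} [Field F] (d n : ℕ)
    (l : RectPartition d n) (c : Fin d → Fin n)
    (hc : ∀ i : Fin d, (c i).val = i.val + l.1 i.rev) :
    (Matrix.of fun i i' : Fin d =>
        (fun p => Polynomial.derivative p)^[i.val] ((Polynomial.X : Polynomial F) ^ (c i').val)).det
      = Polynomial.C ((qval l : ℤ) : F) * Polynomial.X ^ (∑ i, l.1 i) := by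
  have hk : ∀ t, kval l t = ((c t : ℕ) : ℤ) + 1 := fun t => by
    rw [kval, hc t]; push_cast; ring
  have hsum : ∑ j, (c j : ℕ) = ∑ i : Fin d, (i : ℕ) + ∑ i, l.1 i := by
    have hrev : ∑ i : Fin d, l.1 i.rev = ∑ i, l.1 i := Fintype.sum_equiv Fin.revPerm _ _ fun _ => rfl
    rw [sum_congr rfl fun j _ => hc j, sum_add_distrib, hrev]
  have hq : qval l = ∏ i, ∏ j ∈ Ioi i, (((c j : ℕ) : ℤ) - (c i : ℕ)) := by
    rw [qval, prod_filter_lt_eq_prod_prod_Ioi fun i j => kval l j - kval l i]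
    simp [hk]
  rw [Matrix.det_iterate_derivative_X_pow (fun j => (c j : ℕ)) hsum, Matrix.det_descFactorial, hq]
  norm_cast

/-- The maximal minor with columns `J(λ)` of the matrix `B` with `B i j = (d/dz)^i z^j`
(indices `0`-based) equals `q_λ · z^{|λ|}`.  Here `c : Fin d → Fin n` selects the columns
`J(λ)`, i.e. `(c i).val = k_{i+1} - 1 = i + λ_{d-i}`. -/
theorem minor_of_derivative_matrix {F : Type*} [Field F] [CharZero F] (d n : ℕ)
    (hd : 0 < d) (hdn : d < n) (l : RectPartition d n) (c : Fin d → Fin n)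
    (hc : ∀ i : Fin d, (c i).val = i.val + l.1 i.rev) :
    (Matrix.of fun i i' : Fin d =>
        (fun p => Polynomial.derivative p)^[i.val] ((Polynomial.X : Polynomial F) ^ (c i').val)).det
      = Polynomial.C ((qval l : ℤ) : F) * Polynomial.X ^ (∑ i, l.1 i) :=
  minor_of_derivative_matrix_general d n l c hc
end

section
/- Let α ⊂ β be partitions with |β| = |α| + 2 such that the skew shape β/α consists of two boxes in distinct rows i₁ < i₂ and distinct columns. Let γ and γ' be the two intermediate partitions with α ⊂ γ, γ' ⊂ β and |γ| = |γ'| = |α| + 1. Then q_γ·q_{γ'} / (q_α·q_β) = 1 − 1/L², where L is the sum of the horizontal and vertical distances between the two boxes of β/α, and q_λ := Π_{1 ≤ i < j ≤ d} (k_j − k_i) with k_j = j + λ_{d+1-j}. -/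
/-!
`q_λ` is the Vandermonde product of the strictly increasing sequence `k(λ)`, and adding a box
in row `i` raises `k` by one at position `d + 1 - i`. Let `u < v` be the two positions moved
between `α` and `β`; then `k_v - k_u = L` for `α`. Shifting `k_w` by one changes the factor
`D = k_b - k_a` of a pair `a < b` by `δ_w = [b = w] - [a = w]`, and `δ_u δ_v = 0` unless
`(a, b) = (u, v)`, so `(D + δ_u)(D + δ_v) = D (D + δ_u + δ_v)`: all those factors cancel in the
ratio. The factor of `(u, v)` is `L` for `α` and `β`, and `L - 1`, `L + 1` for `γ'`, `γ`.
-/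

section Vandermonde

variable {ι R : Type*} [LinearOrder ι] [CommRing R]

theorem sub_shift_mul_sub_shift (x : ι → R) {u v a b : ι} (huv : u ≠ v)
    (h : ¬(a = u ∧ b = v)) (h' : ¬(a = v ∧ b = u)) :
    ((x + Pi.single u 1 : ι → R) b - (x + Pi.single u 1 : ι → R) a) *
        ((x + Pi.single v 1 : ι → R) b - (x + Pi.single v 1 : ι → R) a) =
      (x b - x a) * ((x + Pi.single u 1 + Pi.single v 1 : ι → R) b -
        (x + Pi.single u 1 + Pi.single v 1 : ι → R) a) := by
  simp only [Pi.add_apply, Pi.single_apply]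
  split_ifs <;> first | ring1 | simp_all

variable [Fintype ι]

def vandermondeProd (x : ι → R) : R :=
  ∏ p ∈ Finset.univ.filter (fun p : ι × ι => p.1 < p.2), (x p.2 - x p.1)

theorem vandermondeProd_pos [PartialOrder R] [IsStrictOrderedRing R] {x : ι → R}
    (hx : StrictMono x) : 0 < vandermondeProd x :=
  Finset.prod_pos fun _ hp => sub_pos.mpr (hx (Finset.mem_filter.mp hp).2)

theorem vandermondeProd_shift_mul (x : ι → R) {u v : ι} (huv : u < v) :
    vandermondeProd (x + Pi.single u 1) * vandermondeProd (x + Pi.single v 1) * (x v - x u) ^ 2 =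
      vandermondeProd x * vandermondeProd (x + Pi.single u 1 + Pi.single v 1) *
        ((x v - x u) ^ 2 - 1) := by
  set S := Finset.univ.filter (fun p : ι × ι => p.1 < p.2)
  set y : ι → R := x + Pi.single u 1
  set z : ι → R := x + Pi.single v 1
  set w : ι → R := x + Pi.single u 1 + Pi.single v 1
  have hmem : (u, v) ∈ S := by simpa [S] using huv
  have hrest : ∏ p ∈ S.erase (u, v), ((y p.2 - y p.1) * (z p.2 - z p.1)) =
      ∏ p ∈ S.erase (u, v), ((x p.2 - x p.1) * (w p.2 - w p.1)) := by
    refine Finset.prod_congr rfl fun p hp => ?_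
    obtain ⟨hpuv, hp⟩ := Finset.mem_erase.mp hp
    exact sub_shift_mul_sub_shift x huv.ne (fun h => hpuv (Prod.ext h.1 h.2))
      (fun h => (Finset.mem_filter.mp hp).2.not_gt (h.1 ▸ h.2 ▸ huv))
  rw [Finset.prod_mul_distrib, Finset.prod_mul_distrib] at hrest
  have hy : y v - y u = x v - x u - 1 := by simp [y, huv.ne']; ring
  have hz : z v - z u = x v - x u + 1 := by simp [z, huv.ne]; ring
  have hw : w v - w u = x v - x u := by simp [w, huv.ne, huv.ne']
  unfold vandermondeProd
  rw [← Finset.mul_prod_erase _ _ hmem, ← Finset.mul_prod_erase _ _ hmem,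
    ← Finset.mul_prod_erase _ _ hmem, ← Finset.mul_prod_erase _ _ hmem, hy, hz, hw]
  linear_combination (x v - x u) ^ 2 * ((x v - x u) ^ 2 - 1) * hrest

end Vandermonde

section RectPartition

variable {d n : ℕ}

theorem qval_eq_vandermondeProd (l : RectPartition d n) : qval l = vandermondeProd (kval l) :=
  rfl

theorem kval_strictMono (l : RectPartition d n) : StrictMono (kval l) := fun i j hij => by
  have := l.2.1 j.rev i.rev (Fin.rev_le_rev.mpr hij.le)
  have : i.val < j.val := hij
  unfold kval
  omega

theorem qval_pos (l : RectPartition d n) : 0 < qval l :=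
  vandermondeProd_pos (kval_strictMono l)

theorem kval_rev (l : RectPartition d n) (i : Fin d) : kval l i.rev = d - i.val + l.1 i := by
  have := i.isLt
  simp only [kval, Fin.val_rev, Fin.rev_rev]
  omega

theorem kval_eq_add_single {l l' : RectPartition d n} (r : Fin d)
    (h : ∀ i, l'.1 i = l.1 i + if i = r then 1 else 0) :
    kval l' = kval l + Pi.single r.rev 1 := by
  funext j
  obtain ⟨i, rfl⟩ := Fin.rev_surjective j
  simp only [Pi.add_apply, kval_rev, h, Pi.single_apply, Fin.rev_inj]
  split_ifs <;> push_cast <;> ring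

end RectPartition

theorem qval_ratio_eq_one_sub_inv_dist_sq_general (d n : ℕ)
    (α β γ γ' : RectPartition d n) (i₁ i₂ : Fin d) (h12 : i₁ < i₂)
    (hb1 : β.1 i₁ = α.1 i₁ + 1) (hb2 : β.1 i₂ = α.1 i₂ + 1)
    (hother : ∀ i : Fin d, i ≠ i₁ → i ≠ i₂ → β.1 i = α.1 i)
    (hγ : ∀ i : Fin d, γ.1 i = if i = i₁ then β.1 i else α.1 i)
    (hγ' : ∀ i : Fin d, γ'.1 i = if i = i₂ then β.1 i else α.1 i)
    (L : ℕ)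
    (hL : L = (i₂.val - i₁.val) + ((β.1 i₁ : ℤ) - (β.1 i₂ : ℤ)).natAbs) :
    ((qval γ * qval γ' : ℤ) : ℚ) / ((qval α * qval β : ℤ) : ℚ) = 1 - 1 / (L : ℚ) ^ 2 := by
  have hi : i₁.val < i₂.val := h12
  have kγ : kval γ = kval α + Pi.single i₁.rev 1 := kval_eq_add_single i₁ fun i => by
    rw [hγ]; split_ifs with h <;> simp [h, hb1]
  have kγ' : kval γ' = kval α + Pi.single i₂.rev 1 := kval_eq_add_single i₂ fun i => by
    rw [hγ']; split_ifs with h <;> simp [h, hb2]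
  have kβ : kval β = kval γ' + Pi.single i₁.rev 1 := kval_eq_add_single i₁ fun i => by
    rw [hγ']
    by_cases h1 : i = i₁
    · simp [h1, h12.ne, hb1]
    by_cases h2 : i = i₂
    · simp [h2, h12.ne']
    · simp [h1, h2, hother i h1 h2]
  have hD : kval α i₁.rev - kval α i₂.rev = L := by
    have := β.2.1 i₁ i₂ h12.le
    rw [kval_rev, kval_rev]
    omega
  have key := vandermondeProd_shift_mul (kval α) (Fin.rev_lt_rev.mpr h12)
  rw [← kγ', ← kγ, ← kβ, hD] at key
  simp only [← qval_eq_vandermondeProd] at key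
  have hq : (qval γ * qval γ' * L ^ 2 : ℚ) = qval α * qval β * (L ^ 2 - 1) := by
    rw [mul_comm (qval γ : ℚ)]; exact_mod_cast key
  have hαβ : ((qval α * qval β : ℤ) : ℚ) ≠ 0 := by
    exact_mod_cast (mul_pos (qval_pos α) (qval_pos β)).ne'
  have hL0 : (L : ℚ) ≠ 0 := by exact_mod_cast (show L ≠ 0 by omega)
  rw [div_eq_iff hαβ]
  field_simp
  push_cast
  linear_combination hq

/-- Let `α ⊂ β` with `|β| = |α| + 2`, the two boxes of `β/α` lying in distinct rows
`i₁ < i₂` and distinct columns, and let `γ, γ'` be the two intermediate partitions.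
Then `q_γ q_{γ'} / (q_α q_β) = 1 - 1/L²`, where `L` is the total of the horizontal and
vertical distances between the two boxes of `β/α`. -/
theorem qval_ratio_eq_one_sub_inv_dist_sq (d n : ℕ) (hd : 0 < d) (hdn : d < n)
    (α β γ γ' : RectPartition d n) (i₁ i₂ : Fin d) (h12 : i₁ < i₂)
    (hb1 : β.1 i₁ = α.1 i₁ + 1) (hb2 : β.1 i₂ = α.1 i₂ + 1)
    (hother : ∀ i : Fin d, i ≠ i₁ → i ≠ i₂ → β.1 i = α.1 i)
    (hcol : β.1 i₁ ≠ β.1 i₂)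
    (hγ : ∀ i : Fin d, γ.1 i = if i = i₁ then β.1 i else α.1 i)
    (hγ' : ∀ i : Fin d, γ'.1 i = if i = i₂ then β.1 i else α.1 i)
    (L : ℕ)
    (hL : L = (i₂.val - i₁.val) + ((β.1 i₁ : ℤ) - (β.1 i₂ : ℤ)).natAbs) :
    ((qval γ * qval γ' : ℤ) : ℚ) / ((qval α * qval β : ℤ) : ℚ) = 1 - 1 / (L : ℚ) ^ 2 :=
  qval_ratio_eq_one_sub_inv_dist_sq_general d n α β γ γ' i₁ i₂ h12 hb1 hb2 hother hγ hγ' L hL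
end

section
/- Let Λ be the lattice of partitions in the d×(n-d) rectangle. Fix a skew shape λ/μ with μ ≤ λ in Λ, and nonzero field elements ω_b for each box b of λ/μ. Define Ω_ν := Π_{b ∉ ν} ω_b for μ ≤ ν ≤ λ (product over boxes of λ/μ outside ν) and Ω_ν := 0 otherwise. Then the tuple (Ω_ν)_{ν ∈ Λ} satisfies Ω_ν · Ω_{ν'} = Ω_{ν ∨ ν'} · Ω_{ν ∧ ν'} for all ν, ν' ∈ Λ. -/
open scoped Classical

/-- A partition fitting in the `d × m` rectangle; `l i` is `λ_{i+1}`. -/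
def RPart (d m : ℕ) :=
  {l : Fin d → ℕ // (∀ i j : Fin d, i ≤ j → l j ≤ l i) ∧ ∀ i, l i ≤ m}

/-- Componentwise meet (min). -/
def pmeet {d m : ℕ} (a b : RPart d m) : RPart d m :=
  ⟨fun i => min (a.1 i) (b.1 i),
    fun i j hij =>
      le_min ((min_le_left _ _).trans (a.2.1 i j hij)) ((min_le_right _ _).trans (b.2.1 i j hij)),
    fun i => min_le_of_left_le (a.2.2 i)⟩

/-- Componentwise join (max). -/
def pjoin {d m : ℕ} (a b : RPart d m) : RPart d m :=
  ⟨fun i => max (a.1 i) (b.1 i),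
    fun i j hij =>
      max_le ((a.2.1 i j hij).trans (le_max_left _ _)) ((b.2.1 i j hij).trans (le_max_right _ _)),
    fun i => max_le (a.2.2 i) (b.2.2 i)⟩

/-- `Ω_ν`: for `μ ≤ ν ≤ lam`, the product of the `ω`-values of the boxes of `lam/μ`
lying outside `ν`; and `0` otherwise.  The box in row `i` (0-based) and column `j`
(0-based) carries the value `ω (i, j)`. -/
noncomputable def Omega {F : Type*} [Field F] {d m : ℕ} (μ lam : RPart d m)
    (ω : Fin d × ℕ → F) (ν : RPart d m) : F :=
  if (∀ i, μ.1 i ≤ ν.1 i) ∧ (∀ i, ν.1 i ≤ lam.1 i) then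
    ∏ i : Fin d, ∏ j ∈ Finset.Ico (ν.1 i) (lam.1 i), ω (i, j)
  else 0

/-!
Both sides vanish unless all four partitions lie in the interval `[μ, λ]`, and `ν, ν'` lie in it
exactly when `ν ∨ ν'` and `ν ∧ ν'` do. Inside the interval the identity holds row by row: the row
lengths of `ν ∨ ν'` and `ν ∧ ν'` are those of `ν` and `ν'`, possibly swapped.
-/

theorem Finset.prod_Ico_mul_prod_Ico_eq_max_min {M : Type*} [CommMonoid M] (f : ℕ → M)
    (a b n : ℕ) :
    (∏ j ∈ Finset.Ico a n, f j) * ∏ j ∈ Finset.Ico b n, f j =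
      (∏ j ∈ Finset.Ico (max a b) n, f j) * ∏ j ∈ Finset.Ico (min a b) n, f j := by
  rcases le_total a b with h | h
  · rw [max_eq_right h, min_eq_left h, mul_comm]
  · rw [max_eq_left h, min_eq_right h]

theorem Set.mem_Icc_and_mem_Icc_iff_sup_inf {α : Type*} [Lattice α] {l u a b : α} :
    a ∈ Set.Icc l u ∧ b ∈ Set.Icc l u ↔ a ⊔ b ∈ Set.Icc l u ∧ a ⊓ b ∈ Set.Icc l u :=
  ⟨fun ⟨ha, hb⟩ => ⟨⟨ha.1.trans le_sup_left, sup_le ha.2 hb.2⟩,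
      ⟨le_inf ha.1 hb.1, inf_le_left.trans ha.2⟩⟩,
    fun ⟨hs, hi⟩ => ⟨⟨hi.1.trans inf_le_left, le_sup_left.trans hs.2⟩,
      ⟨hi.1.trans inf_le_right, le_sup_right.trans hs.2⟩⟩⟩

theorem ite_mul_ite_eq_ite_mul_ite {M : Type*} [MulZeroClass M] {p q r s : Prop}
    [Decidable p] [Decidable q] [Decidable r] [Decidable s] {x y z w : M}
    (hiff : p ∧ q ↔ r ∧ s) (hmul : p → q → r → s → x * y = z * w) :
    ((if p then x else 0) * if q then y else 0) = (if r then z else 0) * if s then w else 0 := by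
  by_cases hpq : p ∧ q
  · obtain ⟨hr, hs⟩ := hiff.1 hpq
    simp only [if_pos hpq.1, if_pos hpq.2, if_pos hr, if_pos hs, hmul hpq.1 hpq.2 hr hs]
  · have hrs : ¬(r ∧ s) := hiff.not.1 hpq
    rw [not_and_or] at hpq hrs
    rcases hpq with h | h <;> rcases hrs with h' | h' <;> simp [h, h']

theorem Omega_GT_relations_general {F : Type*} [Field F] (d m : ℕ) (μ lam : RPart d m)
    (ω : Fin d × ℕ → F) :
    ∀ ν ν' : RPart d m,
      Omega μ lam ω ν * Omega μ lam ω ν' =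
        Omega μ lam ω (pjoin ν ν') * Omega μ lam ω (pmeet ν ν') := by
  intro ν ν'
  -- `Omega`'s side condition is `ν.1 ∈ Set.Icc μ.1 lam.1` in the pointwise order on `Fin d → ℕ`.
  refine ite_mul_ite_eq_ite_mul_ite
    (Set.mem_Icc_and_mem_Icc_iff_sup_inf (l := μ.1) (u := lam.1) (a := ν.1) (b := ν'.1))
    fun _ _ _ _ => ?_
  rw [← Finset.prod_mul_distrib, ← Finset.prod_mul_distrib]
  exact Finset.prod_congr rfl fun i _ =>
    Finset.prod_Ico_mul_prod_Ico_eq_max_min (fun j => ω (i, j)) _ _ _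

/-- For nonzero `ω`-values on the boxes of the skew shape `lam/μ`, the tuple
`(Ω_ν)_ν` satisfies `Ω_ν Ω_{ν'} = Ω_{ν ∨ ν'} Ω_{ν ∧ ν'}` for all partitions `ν, ν'`
in the `d × m` rectangle. -/
theorem Omega_GT_relations {F : Type*} [Field F] (d m : ℕ) (μ lam : RPart d m)
    (hμlam : ∀ i, μ.1 i ≤ lam.1 i) (ω : Fin d × ℕ → F)
    (hω : ∀ i : Fin d, ∀ j : ℕ, μ.1 i ≤ j → j < lam.1 i → ω (i, j) ≠ 0) :
    ∀ ν ν' : RPart d m,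
      Omega μ lam ω ν * Omega μ lam ω ν' =
        Omega μ lam ω (pjoin ν ν') * Omega μ lam ω (pmeet ν ν') :=
  Omega_GT_relations_general d m μ lam ω
end
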